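/- arXiv:1011.1157 — 3 statements merged into one kernel-verified Lean document; each statement's English description precedes it below -/
import Mathlib

section
/- Let n be a positive integer, let 0 < i < j < k ≤ n, let τ = τ_{i,j,k} and write q = k+i−j. Then for all u, v ∈ {0,…,n} with u < v: (1) τ(u) > τ(v) if and only if i ≤ u < q and q ≤ v < k; and (2) τ^{−1}(u) > τ^{−1}(v) if and only if i ≤ u < j and j ≤ v < k. -/
/- ----------------------------------------------------------------------
  Common definitions for the formalization of
  "Sorting by Transpositions is Difficult" (Bulteau, Fertin, Rusu).

  Permutations of {0,…,n} are represented as functions ℕ → ℕ that are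
  bijections of the set {0,…,n} (everything above n is irrelevant /
  fixed).
---------------------------------------------------------------------- -/

set_option autoImplicit false

/-- The transposition `τ_{i,j,k}`, as a function on `ℕ`
(for `0 < i < j < k ≤ n` it is a permutation of `{0,…,n}`,
fixing everything `≥ k`). Here `q = k + i - j`. -/
def tau (i j k x : ℕ) : ℕ :=
  if x < i then x
  else if x < k + i - j then x + j - i
  else if x < k then x + j - k
  else x

/-- The inverse transposition `τ_{i,j,k}⁻¹ = τ_{i,k+i-j,k}`. -/
def tauInv (i j k x : ℕ) : ℕ := tau i (k + i - j) k x

def min3 (p q r : ℕ) : ℕ := min p (min q r)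

def max3 (p q r : ℕ) : ℕ := max p (max q r)

/-- the middle value of three (pairwise distinct) values -/
def mid3 (p q r : ℕ) : ℕ := p + q + r - min3 p q r - max3 p q r

/-- The triple of positions `(p,q,r)` is *well-ordered*:
one of `p<q<r`, `q<r<p`, `r<p<q` holds. -/
def WellOrdered3 (p q r : ℕ) : Prop :=
  (p < q ∧ q < r) ∨ (q < r ∧ r < p) ∨ (r < p ∧ p < q)

/-- The transposition `τ[a,b,c,ψ]` associated with a (well-ordered) triple
whose `ψ`-positions are `(p,q,r)`: it is `τ_{i,j,k}` for `(i,j,k)` the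
sorted sequence of `(p,q,r)`. -/
def tauStep (p q r x : ℕ) : ℕ := tau (min3 p q r) (mid3 p q r) (max3 p q r) x

/-- the inverse of `τ[a,b,c,ψ]` -/
def tauInvStep (p q r x : ℕ) : ℕ := tauInv (min3 p q r) (mid3 p q r) (max3 p q r) x

/-- the number of breakpoints `d_b(π)` of `π` as a permutation of `{0,…,n}`:
the number of `x ∈ {1,…,n}` such that `(x-1,x)` is not an adjacency,
i.e. `π x ≠ π (x-1) + 1`. -/
def db (n : ℕ) (π : ℕ → ℕ) : ℕ :=
  ((Finset.Icc 1 n).filter fun x => π x ≠ π (x - 1) + 1).card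

/-- a triple `(i,j,k)` of integers coding a transposition of `{0,…,n}` -/
def IsTransp (n : ℕ) (t : ℕ × ℕ × ℕ) : Prop :=
  0 < t.1 ∧ t.1 < t.2.1 ∧ t.2.1 < t.2.2 ∧ t.2.2 ≤ n

/-- `π` can be sorted by `m` transpositions:
there are transpositions `τ_1,…,τ_m` with `π ∘ τ_m ∘ ⋯ ∘ τ_1 = Id` on `{0,…,n}`.
(`d_t(π)` is the least such `m`.) -/
def SortsIn (n : ℕ) (π : ℕ → ℕ) (m : ℕ) : Prop :=
  ∃ L : List (ℕ × ℕ × ℕ), L.length = m ∧ (∀ t ∈ L, IsTransp n t) ∧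
    ∀ x ≤ n, π (L.foldl (fun y t => tau t.1 t.2.1 t.2.2 y) x) = x

/-- the three elements of an ordered triple, as a finite set -/
def trElems {α : Type*} [DecidableEq α] (t : α × α × α) : Finset α := {t.1, t.2.1, t.2.2}

/-- A 3DT-instance `I = ⟨Σ, T, ψ⟩` of span `n`: an alphabet `Sig`,
a set `T` of ordered triples partitioning `Sig`, and an injection
`ψ : Sig → {1,…,n}`. -/
structure TDT (α : Type*) [DecidableEq α] (n : ℕ) where
  Sig : Finset α
  T : Finset (α × α × α)
  psi : α → ℕ
  mem_T : ∀ t ∈ T, t.1 ∈ Sig ∧ t.2.1 ∈ Sig ∧ t.2.2 ∈ Sig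
  cover : ∀ σ ∈ Sig, ∃ t ∈ T, σ ∈ trElems t
  nodup_T : ∀ t ∈ T, t.1 ≠ t.2.1 ∧ t.1 ≠ t.2.2 ∧ t.2.1 ≠ t.2.2
  disj_T : ∀ t ∈ T, ∀ t' ∈ T, t ≠ t' → Disjoint (trElems t) (trElems t')
  psi_mem : ∀ σ ∈ Sig, psi σ ∈ Finset.Icc 1 n
  psi_inj : Set.InjOn psi ↑Sig

namespace TDT

variable {α : Type*} [DecidableEq α] {n : ℕ}

/-- the domain `L = ψ(Σ)` of a 3DT-instance -/
def dom (I : TDT α n) : Finset ℕ := I.Sig.image I.psi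

/-- a triple of `T` is well-ordered -/
def WellOrderedT (I : TDT α n) (t : α × α × α) : Prop :=
  WellOrdered3 (I.psi t.1) (I.psi t.2.1) (I.psi t.2.2)

/-- the transposition `τ[a,b,c,ψ]` associated with a well-ordered triple -/
def tauOf (I : TDT α n) (t : α × α × α) (x : ℕ) : ℕ :=
  tauStep (I.psi t.1) (I.psi t.2.1) (I.psi t.2.2) x

/-- the inverse of `τ[a,b,c,ψ]` -/
def tauOfInv (I : TDT α n) (t : α × α × α) (x : ℕ) : ℕ :=
  tauInvStep (I.psi t.1) (I.psi t.2.1) (I.psi t.2.2) x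

end TDT

/-- a *variable*: a pair of triples `[(a,b,c),(x,y,z)]` -/
abbrev Var (α : Type*) : Type _ := (α × α × α) × (α × α × α)

section Main

variable {α : Type*} [DecidableEq α]

/-- The 3DT-step `I →(a,b,c) I'` (only defined when `(a,b,c)` is a
well-ordered triple of `T`): the triple is removed and `ψ` is composed
with `τ[a,b,c,ψ]⁻¹`. -/
def StepT {n : ℕ} (t : α × α × α) (I I' : TDT α n) : Prop :=
  t ∈ I.T ∧ I.WellOrderedT t ∧
  I'.Sig = I.Sig \ trElems t ∧
  I'.T = I.T.erase t ∧
  ∀ σ ∈ I'.Sig, I'.psi σ = I.tauOfInv t (I.psi σ)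

/-- `I` is 3DT-collapsible: some sequence of 3DT-steps reduces it to the
empty instance. -/
def Collapsible {n : ℕ} (I : TDT α n) : Prop :=
  ∃ J : TDT α n,
    Relation.ReflTransGen (fun X Y => ∃ t, StepT t X Y) I J ∧ J.Sig = ∅ ∧ J.T = ∅

/-- `I ∼ π` : the 3DT-instance `I` (of span `n`) and the permutation `π` of
`{0,…,n}` are equivalent: `π 0 = 0`, `π v = π (v-1) + 1` for `v ∉ L`, and
`π v = π (succ_I⁻¹ v - 1) + 1` for `v ∈ L` (expressed triple by triple). -/
def EquivPerm {n : ℕ} (I : TDT α n) (π : ℕ → ℕ) : Prop :=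
  π 0 = 0 ∧
  (∀ v, 1 ≤ v → v ≤ n → v ∉ I.dom → π v = π (v - 1) + 1) ∧
  ∀ t ∈ I.T,
    π (I.psi t.2.1) = π (I.psi t.1 - 1) + 1 ∧
    π (I.psi t.2.2) = π (I.psi t.2.1 - 1) + 1 ∧
    π (I.psi t.1) = π (I.psi t.2.2 - 1) + 1

/-- `(s 1, …, s l)` is an `l`-block-decomposition of span `n` -/
def IsBlockDec (n l : ℕ) (s : ℕ → ℕ) : Prop :=
  s 1 = 0 ∧ (∀ h, 1 ≤ h → h < l → s h < s (h + 1)) ∧ s l < n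

/-- `t_h`: the right end of block `h` (`t_h = s_{h+1}` for `h < l`, `t_l = n`) -/
def tEnd (n l : ℕ) (s : ℕ → ℕ) (h : ℕ) : ℕ := if h = l then n else s (h + 1)

/-- position `p` lies in block `h`, i.e. `p ∈ {s_h + 1, …, t_h}` -/
def InBlock (n l : ℕ) (s : ℕ → ℕ) (h p : ℕ) : Prop := s h < p ∧ p ≤ tEnd n l s h

/-- a triple of `T` is *internal* (all three elements in one block) -/
def InternalT (n l : ℕ) (I : TDT α n) (s : ℕ → ℕ) (t : α × α × α) : Prop :=
  ∃ h, 1 ≤ h ∧ h ≤ l ∧ InBlock n l s h (I.psi t.1) ∧ InBlock n l s h (I.psi t.2.1) ∧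
    InBlock n l s h (I.psi t.2.2)

/-- block conditions (C2)–(C3) of a variable `[(a,b,c),(x,y,z)]`:
`b,x,y` lie in the source block `h0` and `a,c,z` lie in the target block
`h1 ≠ h0`. -/
def VarBlocksAt (n l : ℕ) (I : TDT α n) (s : ℕ → ℕ) (h0 h1 : ℕ) (a b c x y z : α) : Prop :=
  (a, b, c) ∈ I.T ∧ (x, y, z) ∈ I.T ∧
  1 ≤ h0 ∧ h0 ≤ l ∧ 1 ≤ h1 ∧ h1 ≤ l ∧ h1 ≠ h0 ∧
  InBlock n l s h0 (I.psi b) ∧ InBlock n l s h0 (I.psi x) ∧ InBlock n l s h0 (I.psi y) ∧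
  InBlock n l s h1 (I.psi a) ∧ InBlock n l s h1 (I.psi c) ∧ InBlock n l s h1 (I.psi z)

/-- the variable `[(a,b,c),(x,y,z)]` is *valid*, with source `h0` and target `h1`:
conditions (C2)–(C5). -/
def ValidVarAt (n l : ℕ) (I : TDT α n) (s : ℕ → ℕ) (h0 h1 : ℕ) (a b c x y z : α) : Prop :=
  VarBlocksAt n l I s h0 h1 a b c x y z ∧
  (I.psi x < I.psi y →
    I.psi x < I.psi b ∧ I.psi b < I.psi y ∧
      ∀ σ ∈ I.Sig, I.psi x < I.psi σ → I.psi σ < I.psi y → σ = b) ∧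
  I.psi a < I.psi z ∧ I.psi z < I.psi c

/-- the variable `[(a,b,c),(x,y,z)]` is valid in the block decomposition `s` -/
def ValidVar (n l : ℕ) (I : TDT α n) (s : ℕ → ℕ) (a b c x y z : α) : Prop :=
  ∃ h0 h1, ValidVarAt n l I s h0 h1 a b c x y z

/-- validity of a variable given as a pair of triples -/
def ValidVarV (n l : ℕ) (I : TDT α n) (s : ℕ → ℕ) (V : Var α) : Prop :=
  ValidVar n l I s V.1.1 V.1.2.1 V.1.2.2 V.2.1 V.2.2.1 V.2.2.2

/-- conditions (C2)–(C3) only, of a variable given as a pair of triples -/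
def VarC23V (n l : ℕ) (I : TDT α n) (s : ℕ → ℕ) (V : Var α) : Prop :=
  ∃ h0 h1, VarBlocksAt n l I s h0 h1 V.1.1 V.1.2.1 V.1.2.2 V.2.1 V.2.2.1 V.2.2.2

/-- the external triples of `(I,s)` are partitioned into the set `𝒜` of
variables, each satisfying the property `P`. -/
def PartitionIntoVars (n l : ℕ) (I : TDT α n) (s : ℕ → ℕ) (P : Var α → Prop)
    (𝒜 : Finset (Var α)) : Prop :=
  (∀ V ∈ 𝒜, P V) ∧
  (∀ V ∈ 𝒜, V.1 ≠ V.2) ∧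
  (∀ V ∈ 𝒜, ∀ W ∈ 𝒜, V ≠ W → V.1 ≠ W.1 ∧ V.1 ≠ W.2 ∧ V.2 ≠ W.1 ∧ V.2 ≠ W.2) ∧
  (∀ V ∈ 𝒜, ¬ InternalT n l I s V.1 ∧ ¬ InternalT n l I s V.2) ∧
  ∀ t ∈ I.T, ¬ InternalT n l I s t → ∃ V ∈ 𝒜, t = V.1 ∨ t = V.2

/-- `(I,s)` is a *valid context* -/
def ValidContext (n l : ℕ) (I : TDT α n) (s : ℕ → ℕ) : Prop :=
  IsBlockDec n l s ∧ ∃ 𝒜, PartitionIntoVars n l I s (ValidVarV n l I s) 𝒜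

/-- a 3DT-step on an instance together with an `l`-block-decomposition:
`(I,B) →(t) (I',B')` with `B' = τ⁻¹[B]`. -/
def StepB (n l : ℕ) (t : α × α × α) (P P' : TDT α n × (ℕ → ℕ)) : Prop :=
  StepT t P.1 P'.1 ∧ IsBlockDec n l P'.2 ∧
  ∀ h, 1 ≤ h → h ≤ l → P'.2 h = P.1.tauOfInv t (P.2 h)

/-- From the state `st`, the triple `v` (of some variable) can be activated,
possibly after some 3DT-steps using only the internal triples in `ints`. -/
def CanActivate (n l : ℕ) (ints : Set (α × α × α)) (v : α × α × α)
    (st : TDT α n × (ℕ → ℕ)) : Prop :=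
  ∃ (m : ℕ) (c : ℕ → TDT α n × (ℕ → ℕ)) (tr : ℕ → α × α × α),
    c 0 = st ∧ (∀ p ≤ m, StepB n l (tr p) (c p) (c (p + 1))) ∧
    (∀ p < m, tr p ∈ ints) ∧ tr m = v

/-- the block `h` of `(I,s)` reads (in increasing `ψ`-order) exactly as the
word `w`. -/
def BlockWord (n l : ℕ) (I : TDT α n) (s : ℕ → ℕ) (h : ℕ) (w : List α) : Prop :=
  w.Chain' (fun u v => I.psi u < I.psi v) ∧
  (∀ σ ∈ w, σ ∈ I.Sig ∧ InBlock n l s h (I.psi σ)) ∧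
  ∀ σ ∈ I.Sig, InBlock n l s h (I.psi σ) → σ ∈ w

/-- the block `h` is the block `[A1,A2] = copy(A)`,
with word `a y1 e z d y2 x1 b1 c x2 b2 f`. -/
def IsCopyBlock (n l : ℕ) (I : TDT α n) (s : ℕ → ℕ) (h : ℕ) (A A1 A2 : Var α)
    (d e f : α) : Prop :=
  (d, e, f) ∈ I.T ∧
  BlockWord n l I s h
    [A.1.1, A1.2.2.1, e, A.2.2.2, d, A2.2.2.1, A1.2.1, A1.1.2.1, A.1.2.2, A2.2.1, A2.1.2.1, f]

/-- the block `h` is the block `A = and(A1,A2)`,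
with word `a1 e z1 a2 c1 z2 d y c2 x b f`. -/
def IsAndBlock (n l : ℕ) (I : TDT α n) (s : ℕ → ℕ) (h : ℕ) (A1 A2 A : Var α)
    (d e f : α) : Prop :=
  (d, e, f) ∈ I.T ∧
  BlockWord n l I s h
    [A1.1.1, e, A1.2.2.2, A2.1.1, A1.1.2.2, A2.2.2.2, d, A.2.2.1, A2.1.2.2, A.2.1, A.1.2.1, f]

/-- the block `h` is the block `A = or(A1,A2)`,
with word `a1 b' z1 a2 d y a' x b f z2 c1 e c' c2`. -/
def IsOrBlock (n l : ℕ) (I : TDT α n) (s : ℕ → ℕ) (h : ℕ) (A1 A2 A : Var α)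
    (a' b' c' d e f : α) : Prop :=
  (a', b', c') ∈ I.T ∧ (d, e, f) ∈ I.T ∧
  BlockWord n l I s h
    [A1.1.1, b', A1.2.2.2, A2.1.1, d, A.2.2.1, a', A.2.1, A.1.2.1, f, A2.2.2.2, A1.1.2.2, e,
      c', A2.1.2.2]

/-- the block `h` is the block `[A1,A2] = var(A)`,
with word `d1 y1 a d2 y2 e1 a' e2 x1 b1 f1 c' z b' c x2 b2 f2`. -/
def IsVarBlock (n l : ℕ) (I : TDT α n) (s : ℕ → ℕ) (h : ℕ) (A A1 A2 : Var α)
    (d1 e1 f1 d2 e2 f2 a' b' c' : α) : Prop :=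
  (d1, e1, f1) ∈ I.T ∧ (d2, e2, f2) ∈ I.T ∧ (a', b', c') ∈ I.T ∧
  BlockWord n l I s h
    [d1, A1.2.2.1, A.1.1, d2, A2.2.2.1, e1, a', e2, A1.2.1, A1.1.2.1, f1, c', A.2.2.2, b',
      A.1.2.2, A2.2.1, A2.1.2.1, f2]

/-- `(I,s)` is an *assembling of basic blocks* over the set `𝒜` of variables:
the word representation of `I` is a concatenation of `l` blocks, each of one
of the four kinds `copy`, `and`, `or`, `var`; each variable is the input of
exactly one block and the output of exactly one other block, and `T`
consists of the internal triples of the blocks together with the triples of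
the variables. -/
def IsAssembling (n l : ℕ) (I : TDT α n) (s : ℕ → ℕ) (𝒜 : Finset (Var α)) : Prop :=
  IsBlockDec n l s ∧
  (∀ V ∈ 𝒜, V.1 ∈ I.T ∧ V.2 ∈ I.T ∧ V.1 ≠ V.2) ∧
  (∀ V ∈ 𝒜, ∀ W ∈ 𝒜, V ≠ W → V.1 ≠ W.1 ∧ V.1 ≠ W.2 ∧ V.2 ≠ W.1 ∧ V.2 ≠ W.2) ∧
  (∀ V ∈ 𝒜, ∃ h0 h1, VarBlocksAt n l I s h0 h1 V.1.1 V.1.2.1 V.1.2.2 V.2.1 V.2.2.1 V.2.2.2) ∧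
  (∀ t ∈ I.T, InternalT n l I s t ∨ ∃ V ∈ 𝒜, t = V.1 ∨ t = V.2) ∧
  ∀ h, 1 ≤ h → h ≤ l →
    (∃ A ∈ 𝒜, ∃ A1 ∈ 𝒜, ∃ A2 ∈ 𝒜, ∃ d e f : α, IsCopyBlock n l I s h A A1 A2 d e f) ∨
    (∃ A ∈ 𝒜, ∃ A1 ∈ 𝒜, ∃ A2 ∈ 𝒜, ∃ d e f : α, IsAndBlock n l I s h A1 A2 A d e f) ∨
    (∃ A ∈ 𝒜, ∃ A1 ∈ 𝒜, ∃ A2 ∈ 𝒜, ∃ a' b' c' d e f : α,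
      IsOrBlock n l I s h A1 A2 A a' b' c' d e f) ∨
    (∃ A ∈ 𝒜, ∃ A1 ∈ 𝒜, ∃ A2 ∈ 𝒜, ∃ d1 e1 f1 d2 e2 f2 a' b' c' : α,
      IsVarBlock n l I s h A A1 A2 d1 e1 f1 d2 e2 f2 a' b' c')

end Main

/-- satisfiability of a boolean formula in CNF (clauses are lists of
literals; a literal is a pair (variable index, sign)) -/
def CNFSat (m : ℕ) (φ : List (List (Fin m × Bool))) : Prop :=
  ∃ v : Fin m → Bool, ∀ C ∈ φ, ∃ p ∈ C, v p.1 = p.2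

/-!
On the four segments `[0,i)`, `[i,q)`, `[q,k)`, `[k,∞)` the map `τ_{i,j,k}` is a translation, onto
`[0,i)`, `[j,k)`, `[i,j)`, `[k,∞)` respectively. So `τ` is increasing on each segment, and of two
points in different segments the images are ordered as the segments, except that the second
segment is sent above the third. Since `τ⁻¹ = τ_{i,q,k}` and `k + i - q = j`, the statement about
`τ⁻¹` is the one about `τ` with `j` and `q` exchanged.
-/

theorem tau_lt_tau_iff {i j k u v : ℕ} (hij : i ≤ j) (hjk : j ≤ k) (huv : u < v) :
    tau i j k v < tau i j k u ↔ (i ≤ u ∧ u < k + i - j) ∧ (k + i - j ≤ v ∧ v < k) := by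
  unfold tau
  split_ifs <;> omega

theorem stmt0_general (i j k : ℕ) (hij : i < j) (hjk : j < k)
    (u v : ℕ) (huv : u < v) :
    (tau i j k v < tau i j k u ↔
      (i ≤ u ∧ u < k + i - j) ∧ (k + i - j ≤ v ∧ v < k)) ∧
    (tauInv i j k v < tauInv i j k u ↔
      (i ≤ u ∧ u < j) ∧ (j ≤ v ∧ v < k)) := by
  refine ⟨tau_lt_tau_iff hij.le hjk.le huv, ?_⟩
  have h := tau_lt_tau_iff (i := i) (j := k + i - j) (k := k) (by omega) (by omega) huv
  rwa [show k + i - (k + i - j) = j by omega] at h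

/-- Property 1 of the paper.
Let `0 < i < j < k ≤ n`, `τ = τ_{i,j,k}`, `q = k+i-j`. For all
`u < v` in `{0,…,n}`:
`τ(u) > τ(v) ↔ i ≤ u < q ≤ v < k` and
`τ⁻¹(u) > τ⁻¹(v) ↔ i ≤ u < j ≤ v < k`. -/
theorem stmt0 (n i j k : ℕ) (hn : 0 < n) (hi : 0 < i) (hij : i < j) (hjk : j < k)
    (hkn : k ≤ n) (u v : ℕ) (hu : u ≤ n) (hv : v ≤ n) (huv : u < v) :
    (tau i j k v < tau i j k u ↔
      (i ≤ u ∧ u < k + i - j) ∧ (k + i - j ≤ v ∧ v < k)) ∧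
    (tauInv i j k v < tauInv i j k u ↔
      (i ≤ u ∧ u < j) ∧ (j ≤ v ∧ v < k)) :=
  stmt0_general i j k hij hjk u v huv
end

section
/- Let π be a permutation of {0,…,n} and τ = τ_{i,j,k} a transposition with 0 < i < j < k ≤ n. Then for all x ∈ {1,…,n}∖{i,j,k}, the pair (x−1,x) is an adjacency of π if and only if (τ^{−1}(x)−1, τ^{−1}(x)) is an adjacency of π∘τ. Consequently d_b(π∘τ) ≥ d_b(π) − 3. -/
/- ----------------------------------------------------------------------
  Common definitions for the formalization of
  "Sorting by Transpositions is Difficult" (Bulteau, Fertin, Rusu).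

  Permutations of {0,…,n} are represented as functions ℕ → ℕ that are
  bijections of the set {0,…,n} (everything above n is irrelevant /
  fixed).
---------------------------------------------------------------------- -/

set_option autoImplicit false

/-!
`τ_{i,j,k}` exchanges the two adjacent segments `[i, j)` and `[j, k)` without changing the order
inside either of them, so `τ⁻¹` keeps every pair `(x - 1, x)` consecutive except at the three cut
points `x ∈ {i, j, k}`. Hence `τ⁻¹` maps the breakpoints of `π` outside `{i, j, k}` injectively to
breakpoints of `π ∘ τ`.
-/

lemma tau_tauInv {i j k : ℕ} (hij : i < j) (hjk : j < k) (x : ℕ) :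
    tau i j k (tauInv i j k x) = x := by
  simp only [tau, tauInv]
  split_ifs <;> omega

lemma tau_tauInv_sub_one {i j k x : ℕ} (hij : i < j) (hjk : j < k)
    (hxi : x ≠ i) (hxj : x ≠ j) (hxk : x ≠ k) :
    tau i j k (tauInv i j k x - 1) = x - 1 := by
  simp only [tau, tauInv]
  split_ifs <;> omega

lemma tauInv_mem_Icc {n i j k x : ℕ} (hi : 0 < i) (hij : i < j) (hjk : j < k) (hkn : k ≤ n)
    (hx : x ∈ Finset.Icc 1 n) : tauInv i j k x ∈ Finset.Icc 1 n := by
  simp only [tau, tauInv, Finset.mem_Icc] at hx ⊢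
  split_ifs <;> omega

lemma db_le_db_comp_add_card (n : ℕ) (π f g : ℕ → ℕ) (E : Finset ℕ)
    (hfg : Function.LeftInverse f g)
    (hg : ∀ x ∈ Finset.Icc 1 n, g x ∈ Finset.Icc 1 n)
    (hfg_sub_one : ∀ x ∉ E, f (g x - 1) = x - 1) :
    db n π ≤ db n (fun v => π (f v)) + E.card := by
  unfold db
  refine Finset.card_le_card_sdiff_add_card.trans (Nat.add_le_add_right ?_ _)
  refine Finset.card_le_card_of_injOn g (fun x hx => ?_) hfg.injective.injOn
  simp only [Finset.coe_sdiff, Set.mem_sdiff, Finset.mem_coe, Finset.mem_filter] at hx ⊢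
  obtain ⟨⟨hxI, hbreak⟩, hxE⟩ := hx
  exact ⟨hg x hxI, by rwa [hfg x, hfg_sub_one x hxE]⟩

theorem stmt2_general (n i j k : ℕ) (π : ℕ → ℕ)
    (hi : 0 < i) (hij : i < j) (hjk : j < k) (hkn : k ≤ n) :
    (∀ x, 1 ≤ x → x ≤ n → x ≠ i → x ≠ j → x ≠ k →
      (π x = π (x - 1) + 1 ↔
       π (tau i j k (tauInv i j k x)) = π (tau i j k (tauInv i j k x - 1)) + 1)) ∧
    db n π ≤ db n (fun v => π (tau i j k v)) + 3 := by
  refine ⟨fun x _ _ hxi hxj hxk => ?_, ?_⟩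
  · rw [tau_tauInv hij hjk, tau_tauInv_sub_one hij hjk hxi hxj hxk]
  · have hE : ∀ x ∉ ({i, j, k} : Finset ℕ), tau i j k (tauInv i j k x - 1) = x - 1 := by
      intro x hx
      simp only [Finset.mem_insert, Finset.mem_singleton, not_or] at hx
      exact tau_tauInv_sub_one hij hjk hx.1 hx.2.1 hx.2.2
    calc db n π ≤ db n (fun v => π (tau i j k v)) + ({i, j, k} : Finset ℕ).card :=
          db_le_db_comp_add_card n π _ _ _ (tau_tauInv hij hjk)
            (fun _ => tauInv_mem_Icc hi hij hjk hkn) hE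
      _ ≤ db n (fun v => π (tau i j k v)) + 3 := Nat.add_le_add_left Finset.card_le_three _

/-- Property 3 of the paper.
Let `π` be a permutation of `{0,…,n}` and `τ = τ_{i,j,k}` with
`0 < i < j < k ≤ n`. For all `x ∈ {1,…,n} ∖ {i,j,k}`, the pair `(x-1,x)`
is an adjacency of `π` iff `(τ⁻¹(x)-1, τ⁻¹(x))` is an adjacency of `π∘τ`.
Consequently `d_b(π∘τ) ≥ d_b(π) - 3`. -/
theorem stmt2 (n i j k : ℕ) (π : ℕ → ℕ)
    (hbij : Set.BijOn π (Set.Icc 0 n) (Set.Icc 0 n))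
    (hi : 0 < i) (hij : i < j) (hjk : j < k) (hkn : k ≤ n) :
    (∀ x, 1 ≤ x → x ≤ n → x ≠ i → x ≠ j → x ≠ k →
      (π x = π (x - 1) + 1 ↔
       π (tau i j k (tauInv i j k x)) = π (tau i j k (tauInv i j k x - 1)) + 1)) ∧
    db n π ≤ db n (fun v => π (tau i j k v)) + 3 :=
  stmt2_general n i j k π hi hij hjk hkn
end

section
/- Let I = ⟨Σ,T,ψ⟩ be a 3DT-instance of span n with domain L, and let π be a permutation of {0,…,n} such that I ∼ π. Then the number of breakpoints of π equals |L| = 3|T|. -/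
/- ----------------------------------------------------------------------
  Common definitions for the formalization of
  "Sorting by Transpositions is Difficult" (Bulteau, Fertin, Rusu).

  Permutations of {0,…,n} are represented as functions ℕ → ℕ that are
  bijections of the set {0,…,n} (everything above n is irrelevant /
  fixed).
---------------------------------------------------------------------- -/

set_option autoImplicit false

/-! Every position of the domain `L` is a breakpoint: if `v = ψ σ` and `ρ` is the predecessor
of `σ` in its triple, then `π v = π (ψ ρ - 1) + 1`, so an adjacency at `v` would force
`π (v - 1) = π (ψ ρ - 1)`, hence `ψ σ = ψ ρ` by injectivity of `π` and `σ = ρ` by injectivity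
of `ψ`. Every position outside `L` is an adjacency by the second clause of `I ∼ π`. So
`d_b(π) = |L|`, and `|L| = |Σ| = 3|T|` since `ψ` is injective and `T` partitions `Σ` into
triples. -/

theorem card_trElems {α : Type*} [DecidableEq α] {t : α × α × α}
    (h₁₂ : t.1 ≠ t.2.1) (h₁₃ : t.1 ≠ t.2.2) (h₂₃ : t.2.1 ≠ t.2.2) :
    (trElems t).card = 3 := by
  rw [trElems, Finset.card_insert_of_notMem (by simp [h₁₂, h₁₃]),
    Finset.card_insert_of_notMem (by simp [h₂₃]), Finset.card_singleton]

namespace TDT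

variable {α : Type*} [DecidableEq α] {n : ℕ} (I : TDT α n)

theorem mem_Icc_of_mem_dom {v : ℕ} (hv : v ∈ I.dom) : v ∈ Finset.Icc 1 n := by
  obtain ⟨σ, hσ, rfl⟩ := Finset.mem_image.mp hv
  exact I.psi_mem σ hσ

theorem sig_eq_biUnion : I.Sig = I.T.biUnion trElems := by
  ext σ
  rw [Finset.mem_biUnion]
  refine ⟨I.cover σ, ?_⟩
  rintro ⟨t, htT, hσt⟩
  obtain ⟨ha, hb, hc⟩ := I.mem_T t htT
  simp only [trElems, Finset.mem_insert, Finset.mem_singleton] at hσt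
  rcases hσt with rfl | rfl | rfl <;> assumption

theorem card_dom : I.dom.card = 3 * I.T.card := by
  have hcard3 : ∀ t ∈ I.T, (trElems t).card = 3 := fun t ht =>
    card_trElems (I.nodup_T t ht).1 (I.nodup_T t ht).2.1 (I.nodup_T t ht).2.2
  rw [dom, Finset.card_image_of_injOn I.psi_inj, sig_eq_biUnion,
    Finset.card_biUnion I.disj_T, Finset.sum_congr rfl hcard3, Finset.sum_const, smul_eq_mul,
    mul_comm]

end TDT

namespace EquivPerm

variable {α : Type*} [DecidableEq α] {n : ℕ} {I : TDT α n} {π : ℕ → ℕ}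

theorem exists_pred (heq : EquivPerm I π) {σ : α} (hσ : σ ∈ I.Sig) :
    ∃ ρ ∈ I.Sig, ρ ≠ σ ∧ π (I.psi σ) = π (I.psi ρ - 1) + 1 := by
  obtain ⟨t, htT, hσt⟩ := I.cover σ hσ
  obtain ⟨ha, hb, hc⟩ := I.mem_T t htT
  obtain ⟨hab, hac, hbc⟩ := I.nodup_T t htT
  obtain ⟨hπb, hπc, hπa⟩ := heq.2.2 t htT
  simp only [trElems, Finset.mem_insert, Finset.mem_singleton] at hσt
  rcases hσt with rfl | rfl | rfl
  · exact ⟨_, hc, hac.symm, hπa⟩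
  · exact ⟨_, ha, hab, hπb⟩
  · exact ⟨_, hb, hbc, hπc⟩

theorem breakpoint_of_mem_dom (heq : EquivPerm I π) (hinj : Set.InjOn π (Set.Icc 0 n))
    {v : ℕ} (hv : v ∈ I.dom) : π v ≠ π (v - 1) + 1 := by
  intro hadj
  obtain ⟨σ, hσ, rfl⟩ := Finset.mem_image.mp hv
  obtain ⟨ρ, hρ, hρσ, hπ⟩ := heq.exists_pred hσ
  have hψ : I.psi ρ ≠ I.psi σ := fun h => hρσ (I.psi_inj hρ hσ h)
  have hσIcc := Finset.mem_Icc.mp (I.psi_mem σ hσ)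
  have hρIcc := Finset.mem_Icc.mp (I.psi_mem ρ hρ)
  have hpred : I.psi σ - 1 = I.psi ρ - 1 :=
    hinj (by simp only [Set.mem_Icc]; omega) (by simp only [Set.mem_Icc]; omega) (by omega)
  omega

theorem db_eq_card_dom (heq : EquivPerm I π) (hinj : Set.InjOn π (Set.Icc 0 n)) :
    db n π = I.dom.card := by
  rw [db]
  congr 1
  ext v
  rw [Finset.mem_filter]
  refine ⟨fun ⟨hv, hbp⟩ => ?_,
    fun hv => ⟨I.mem_Icc_of_mem_dom hv, heq.breakpoint_of_mem_dom hinj hv⟩⟩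
  obtain ⟨hv1, hvn⟩ := Finset.mem_Icc.mp hv
  by_contra hvL
  exact hbp (heq.2.1 v hv1 hvn hvL)

end EquivPerm

/-- Property 8 of the paper.
If `I = ⟨Σ,T,ψ⟩` is a 3DT-instance of span `n` with domain `L` and `π` is a
permutation of `{0,…,n}` with `I ∼ π`, then `d_b(π) = |L| = 3|T|`. -/
theorem stmt4 {α : Type*} [DecidableEq α] {n : ℕ} (I : TDT α n) (π : ℕ → ℕ)
    (hbij : Set.BijOn π (Set.Icc 0 n) (Set.Icc 0 n))
    (heq : EquivPerm I π) :
    db n π = I.dom.card ∧ I.dom.card = 3 * I.T.card :=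
  ⟨heq.db_eq_card_dom hbij.injOn, I.card_dom⟩
end
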